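/- There is a constant K > 0, independent of N, such that for every N ∈ ℕ with Zeckendorf representation N = ∑_{j=1}^m F_{n_j} and every 1 ≤ j ≤ m, the ratio Ā_{n_j}(ε_j)/A_{n_j} satisfies | Ā_{n_j}(ε_j)/A_{n_j} − (1 + p_j) | ≤ K φ^{2 n_j}, where ε_j = −∑_{s=j+1}^m (−φ)^{n_s} and p_j = ∑_{s=j+1}^m (−φ)^{n_s − n_j}; moreover p_j ∈ [−φ², φ]. -/

import Mathlib

open Real Finset

/-- The fractional part of the golden ratio. -/
noncomputable def goldenφ : ℝ := (Real.sqrt 5 - 1) / 2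

/-- `A_n = |2 F_n sin(π φ^n)|`. -/
noncomputable def Aval (n : ℕ) : ℝ := |2 * (Nat.fib n : ℝ) * Real.sin (π * goldenφ ^ n)|

/-- `Ā_n(ε) = 2 F_n |sin π((−φ)^n − ε)|`. -/
noncomputable def Abar (n : ℕ) (ε : ℝ) : ℝ :=
  2 * (Nat.fib n : ℝ) * |Real.sin (π * ((-goldenφ) ^ n - ε))|

/-!
Write `p = p_j`. Since `ε_j = -(-φ)^{n_j} p`, the sine in `Ā_{n_j}(ε_j)` is evaluated at
`π (-φ)^{n_j} (1 + p)`, so with `b = π φ^{n_j}` the ratio is `|sin (b (1 + p))| / |sin b|`.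
As `sin x = x + O(x³)` and `sin b ≥ 2b/π`, this is `1 + p + O(b²)` once `1 + p` is bounded.
The bound `p ∈ [-φ², φ]` comes from peeling off the first term of the tail,
`p_j = (-φ)^d (1 + p_{j+1})` with `d = n_{j+1} - n_j ≥ 2`, and noting that `[-φ², φ]` is
stable under `x ↦ (-φ)^d (1 + x)`.
-/

theorem goldenφ_eq_neg_goldenConj : goldenφ = -goldenConj := by
  unfold goldenφ goldenConj
  ring

theorem goldenφ_pos : 0 < goldenφ := by
  simpa [goldenφ_eq_neg_goldenConj] using goldenConj_neg

theorem goldenφ_lt_one : goldenφ < 1 := by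
  simpa [goldenφ_eq_neg_goldenConj, neg_lt] using neg_one_lt_goldenConj

theorem goldenφ_sq : goldenφ ^ 2 = 1 - goldenφ := by
  rw [goldenφ_eq_neg_goldenConj, neg_sq, goldenConj_sq]
  ring

theorem goldenφ_pow_succ_mul_one_add (k : ℕ) :
    goldenφ ^ (k + 1) * (1 + goldenφ) = goldenφ ^ k := by
  rw [pow_succ, mul_assoc, mul_one_add, ← sq, goldenφ_sq]
  ring

theorem goldenφ_pow_le_half {n : ℕ} (hn : 2 ≤ n) : goldenφ ^ n ≤ 1 / 2 := by
  have h5 : (2 : ℝ) ≤ √5 := by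
    rw [show (2 : ℝ) = √(2 ^ 2) by simp]
    exact Real.sqrt_le_sqrt (by norm_num)
  calc goldenφ ^ n ≤ goldenφ ^ 2 := pow_le_pow_of_le_one goldenφ_pos.le goldenφ_lt_one.le hn
    _ ≤ 1 / 2 := by rw [goldenφ_sq]; unfold goldenφ; linarith

-- By `φ^(k+1) (1 + φ) = φ^k`, the image has modulus at most `φ^(d-1)`,
-- which is `≤ φ` in general and `≤ φ²` for odd `d`.
theorem neg_goldenφ_pow_mul_one_add_mem_Icc {d : ℕ} (hd : 2 ≤ d) {x : ℝ}
    (hx : x ∈ Set.Icc (-goldenφ ^ 2) goldenφ) :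
    (-goldenφ) ^ d * (1 + x) ∈ Set.Icc (-goldenφ ^ 2) goldenφ := by
  obtain ⟨hx₁, hx₂⟩ := hx
  have hφ := goldenφ_pos
  have hsq := goldenφ_sq
  have hmod : goldenφ ^ d * (1 + x) ≤ goldenφ ^ (d - 1) := by
    have h := goldenφ_pow_succ_mul_one_add (d - 1)
    rw [Nat.sub_add_cancel (by omega)] at h
    rw [← h]
    gcongr
  have hnonneg : 0 ≤ goldenφ ^ d * (1 + x) := by
    have := pow_pos hφ d
    nlinarith
  have hanti {a b : ℕ} (hab : a ≤ b) : goldenφ ^ b ≤ goldenφ ^ a :=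
    pow_le_pow_of_le_one hφ.le goldenφ_lt_one.le hab
  rcases Nat.even_or_odd d with heven | hodd
  · have : goldenφ ^ (d - 1) ≤ goldenφ ^ 1 := hanti (by omega)
    rw [heven.neg_pow]
    constructor <;> nlinarith
  · have : goldenφ ^ (d - 1) ≤ goldenφ ^ 2 := hanti (by obtain ⟨k, rfl⟩ := hodd; omega)
    rw [hodd.neg_pow]
    constructor <;> nlinarith

theorem monotoneOn_Icc_of_add_two_le {n : ℕ → ℕ} {a b : ℕ}
    (hgap : ∀ i, a ≤ i → i < b → n i + 2 ≤ n (i + 1)) : MonotoneOn n (Set.Icc a b) :=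
  monotoneOn_of_le_add_one Set.ordConnected_Icc fun i _ hi hi' => by
    have := hgap i hi.1 (by grind)
    omega

theorem sum_pow_sub_eq_pow_sub_mul_sum {ι R : Type*} [CommSemiring R] (x : R) (n : ι → ℕ)
    (S : Finset ι) {e f : ℕ} (hef : e ≤ f) (hS : ∀ s ∈ S, f ≤ n s) :
    ∑ s ∈ S, x ^ (n s - e) = x ^ (f - e) * ∑ s ∈ S, x ^ (n s - f) := by
  rw [mul_sum]
  refine sum_congr rfl fun s hs => ?_
  rw [← pow_add]
  have := hS s hs
  congr 1
  omega

theorem sum_neg_goldenφ_pow_sub_mem_Icc {n : ℕ → ℕ} {j m : ℕ}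
    (hgap : ∀ i, j ≤ i → i < m → n i + 2 ≤ n (i + 1)) :
    ∑ s ∈ Icc (j + 1) m, (-goldenφ) ^ (n s - n j) ∈ Set.Icc (-goldenφ ^ 2) goldenφ := by
  induction hk : m - j generalizing j with
  | zero =>
    rw [Icc_eq_empty (by omega), sum_empty]
    exact ⟨by nlinarith [goldenφ_pos], goldenφ_pos.le⟩
  | succ k ih =>
    have hmono : MonotoneOn n (Set.Icc (j + 1) m) :=
      monotoneOn_Icc_of_add_two_le fun i hi hi' => hgap i (by omega) hi'
    have hj := hgap j le_rfl (by omega)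
    rw [sum_pow_sub_eq_pow_sub_mul_sum _ n _ (by omega)
        fun s hs => hmono ⟨le_rfl, by omega⟩ (mem_Icc.1 hs) (mem_Icc.1 hs).1,
      ← add_sum_Ioc_eq_sum_Icc (by omega), Nat.sub_self, pow_zero,
      ← Icc_add_one_left_eq_Ioc]
    exact neg_goldenφ_pow_mul_one_add_mem_Icc (by omega)
      (ih (fun i hi hi' => hgap i (by omega) hi') (by omega))

theorem abs_sin_mul_div_sin_sub_le {b : ℝ} (hb₀ : 0 < b) (hb : b ≤ π / 2) (c : ℝ) :
    |sin (b * c) / sin b - c| ≤ π * (|c| ^ 3 + |c|) / 12 * b ^ 2 := by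
  have hsin : 2 / π * b ≤ sin b := mul_le_sin hb₀.le hb
  have hsin₀ : 0 < sin b := lt_of_lt_of_le (by positivity) hsin
  have hnum : |sin (b * c) - c * sin b| ≤ (|c| ^ 3 + |c|) * b ^ 3 / 6 := by
    have h₁ := abs_sub_sin_le (b * c)
    have h₂ := abs_sub_sin_le b
    rw [abs_sub_comm] at h₁
    calc |sin (b * c) - c * sin b| = |(sin (b * c) - b * c) + c * (b - sin b)| := by ring_nf
      _ ≤ |sin (b * c) - b * c| + |c| * |b - sin b| := by
        rw [← abs_mul]; exact abs_add_le _ _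
      _ ≤ |b * c| ^ 3 / 6 + |c| * (|b| ^ 3 / 6) := by gcongr
      _ = (|c| ^ 3 + |c|) * b ^ 3 / 6 := by
        rw [abs_mul, abs_of_pos hb₀]; ring
  rw [div_sub' hsin₀.ne', abs_div, abs_of_pos hsin₀, div_le_iff₀ hsin₀, mul_comm (sin b)]
  calc |sin (b * c) - c * sin b| ≤ (|c| ^ 3 + |c|) * b ^ 3 / 6 := hnum
    _ = π * (|c| ^ 3 + |c|) / 12 * b ^ 2 * (2 / π * b) := by field_simp; ring
    _ ≤ π * (|c| ^ 3 + |c|) / 12 * b ^ 2 * sin b := by gcongr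

theorem Abar_div_Aval_eq {n : ℕ} (hn : n ≠ 0) (p : ℝ) :
    Abar n (-((-goldenφ) ^ n * p)) / Aval n =
      |sin (π * goldenφ ^ n * (1 + p))| / |sin (π * goldenφ ^ n)| := by
  have hF : (0 : ℝ) < 2 * Nat.fib n := by
    have := Nat.fib_pos.2 (Nat.pos_of_ne_zero hn)
    positivity
  have harg : π * ((-goldenφ) ^ n - -((-goldenφ) ^ n * p)) =
      (-1) ^ n * (π * goldenφ ^ n * (1 + p)) := by
    rw [neg_pow]; ring
  unfold Abar Aval
  rw [abs_mul, abs_of_pos hF, mul_div_mul_left _ _ hF.ne', harg]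
  rcases neg_one_pow_eq_or ℝ n with h | h <;> simp [h, sin_neg]

theorem abs_abs_sin_div_abs_sin_sub_le {ν : ℕ} (hν : 2 ≤ ν) {c : ℝ} (hc₀ : 0 ≤ c)
    (hc₂ : c ≤ 2) :
    |(|sin (π * goldenφ ^ ν * c)| / |sin (π * goldenφ ^ ν)|) - c| ≤
      π ^ 3 * goldenφ ^ (2 * ν) := by
  have hπ := pi_pos
  have hφ := goldenφ_pos
  have hb₀ : 0 < π * goldenφ ^ ν := by positivity
  have hb : π * goldenφ ^ ν ≤ π / 2 := by nlinarith [goldenφ_pow_le_half hν]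
  have hcube : c ^ 3 + c ≤ 12 := by
    have := pow_le_pow_left₀ hc₀ hc₂ 3
    linarith
  rw [← abs_div]
  calc _ ≤ |sin (π * goldenφ ^ ν * c) / sin (π * goldenφ ^ ν) - c| := by
        simpa [abs_of_nonneg hc₀] using abs_abs_sub_abs_le_abs_sub _ c
    _ ≤ π * (|c| ^ 3 + |c|) / 12 * (π * goldenφ ^ ν) ^ 2 :=
        abs_sin_mul_div_sin_sub_le hb₀ hb c
    _ = π ^ 3 * goldenφ ^ (2 * ν) * ((c ^ 3 + c) / 12) := by
        rw [abs_of_nonneg hc₀, pow_mul']; ring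
    _ ≤ π ^ 3 * goldenφ ^ (2 * ν) * 1 := by gcongr; linarith [hcube]
    _ = π ^ 3 * goldenφ ^ (2 * ν) := mul_one _

/-- There is a constant `K > 0`, independent of `N`, such that for every `N ∈ ℕ` with
Zeckendorf representation `N = ∑_{j=1}^m F_{n_j}` and every `1 ≤ j ≤ m`, the ratio
`Ā_{n_j}(ε_j)/A_{n_j}` satisfies `|Ā_{n_j}(ε_j)/A_{n_j} − (1 + p_j)| ≤ K φ^{2 n_j}`, where
`ε_j = −∑_{s=j+1}^m (−φ)^{n_s}` and `p_j = ∑_{s=j+1}^m (−φ)^{n_s − n_j}`; moreover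
`p_j ∈ [−φ², φ]`. -/
theorem Abar_ratio_estimate :
    ∃ K : ℝ, 0 < K ∧
      ∀ (N m : ℕ) (n : ℕ → ℕ), 1 ≤ m → 2 ≤ n 1 →
        (∀ j, 1 ≤ j → j ≤ m - 1 → n j + 2 ≤ n (j + 1)) →
        N = ∑ j ∈ Finset.Icc 1 m, Nat.fib (n j) →
        ∀ j, 1 ≤ j → j ≤ m →
          |Abar (n j) (-(∑ s ∈ Finset.Icc (j + 1) m, (-goldenφ) ^ (n s))) / Aval (n j) -
              (1 + ∑ s ∈ Finset.Icc (j + 1) m, (-goldenφ) ^ (n s - n j))|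
            ≤ K * goldenφ ^ (2 * n j) ∧
          (∑ s ∈ Finset.Icc (j + 1) m, (-goldenφ) ^ (n s - n j)) ∈
            Set.Icc (-goldenφ ^ 2) goldenφ := by
  refine ⟨π ^ 3, by positivity, fun N m n _ hn₁ hgap _ j hj hjm => ?_⟩
  have hmono : MonotoneOn n (Set.Icc 1 m) :=
    monotoneOn_Icc_of_add_two_le fun i hi hi' => hgap i hi (by omega)
  have hnj : 2 ≤ n j := hn₁.trans (hmono ⟨le_rfl, by omega⟩ ⟨hj, hjm⟩ hj)
  set p := ∑ s ∈ Icc (j + 1) m, (-goldenφ) ^ (n s - n j)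
  have hp : p ∈ Set.Icc (-goldenφ ^ 2) goldenφ :=
    sum_neg_goldenφ_pow_sub_mem_Icc fun i hi hi' => hgap i (by omega) (by omega)
  have hε : ∑ s ∈ Icc (j + 1) m, (-goldenφ) ^ n s = (-goldenφ) ^ n j * p := by
    simpa using sum_pow_sub_eq_pow_sub_mul_sum (-goldenφ) n (Icc (j + 1) m) (Nat.zero_le (n j))
      fun s hs => hmono ⟨hj, hjm⟩ (by grind) (by grind)
  refine ⟨?_, hp⟩
  rw [hε, Abar_div_Aval_eq (by omega)]
  exact abs_abs_sin_div_abs_sin_sub_le hnj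
    (by linarith [hp.1, goldenφ_sq, goldenφ_pos]) (by linarith [hp.2, goldenφ_lt_one])
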